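/- Under the assumptions of the previous statement (T invertible, V_m = E[(T(y)_m − T̄_m)(X − K)], D = K + Σ_m t_m V_m with t = T^{-1}(T(y) − T̄)), the minimum value of the mean-squared error satisfies E‖D − X‖_F² = E‖X − K‖_F² − Σ_{m,m'} [T^{-1}]_{m,m'} tr(V_m^H V_{m'}). -/

import Mathlib

open MeasureTheory ProbabilityTheory Matrix
open scoped NNReal

noncomputable def frobSq {N : ℕ} (A : Matrix (Fin N) (Fin N) ℂ) : ℝ :=
  ∑ i, ∑ j, ‖A i j‖ ^ 2

/-! With `s = T(y) − T̄` and coefficients `c = T⁻¹ s`, the second moments are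
`E[c cᵀ] = T⁻¹ T T⁻ᵀ = T⁻¹` (as `T` is symmetric) and `E[c_m (X − K)] = Σ_k [T⁻¹]_{mk} V_k`.
Expanding `‖Σ_m c_m V_m − (X − K)‖²` in the real inner product `Re tr(Aᴴ B)` behind the
Frobenius norm, the quadratic term and the cross term both integrate to
`Σ_{m,k} [T⁻¹]_{mk} Re tr(V_mᴴ V_k)`; it enters once with `+` and once with `−2`. -/

open scoped RealInnerProductSpace

section

variable {Ω : Type*} [MeasurableSpace Ω] {μ : Measure Ω}

theorem memLp_mulVec_apply {ι κ : Type*} [Fintype κ] (A : Matrix ι κ ℝ) {s : Ω → κ → ℝ}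
    (hs : ∀ k, MemLp (fun ω => s ω k) 2 μ) (i : ι) : MemLp (fun ω => (A *ᵥ s ω) i) 2 μ := by
  simp only [mulVec, dotProduct]
  exact memLp_finsetSum (f := fun k ω => A i k * s ω k) _ fun k _ => (hs k).const_mul (A i k)

theorem integral_mulVec_apply_smul {ι κ E : Type*} [Fintype κ] [NormedAddCommGroup E]
    [NormedSpace ℝ E] (A : Matrix ι κ ℝ) {s : Ω → κ → ℝ} {Z : Ω → E}
    (hsZ : ∀ k, Integrable (fun ω => s ω k • Z ω) μ) (i : ι) :
    ∫ ω, (A *ᵥ s ω) i • Z ω ∂μ = ∑ k, A i k • ∫ ω, s ω k • Z ω ∂μ := by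
  simp only [mulVec, dotProduct, Finset.sum_smul, mul_smul]
  rw [integral_finsetSum (f := fun k ω => A i k • s ω k • Z ω) _
    fun k _ => (hsZ k).smul (A i k)]
  simp only [integral_smul]

theorem integral_mulVec_apply_mul_mulVec_apply {ι ι' κ : Type*} [Fintype κ]
    (A : Matrix ι κ ℝ) (B : Matrix ι' κ ℝ) {s : Ω → κ → ℝ}
    (hs : ∀ k, MemLp (fun ω => s ω k) 2 μ) (i : ι) (j : ι') :
    ∫ ω, (A *ᵥ s ω) i * (B *ᵥ s ω) j ∂μ
      = (A * Matrix.of (fun k l => ∫ ω, s ω k * s ω l ∂μ) * Bᵀ) i j := by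
  have hss : ∀ k l, Integrable (fun ω => s ω k * s ω l) μ :=
    fun k l => (hs k).integrable_mul (hs l)
  have hexpand : ∀ ω, (A *ᵥ s ω) i * (B *ᵥ s ω) j
      = ∑ k, ∑ l, A i k * B j l * (s ω k * s ω l) := by
    intro ω
    simp only [mulVec, dotProduct, Finset.sum_mul_sum]
    exact Finset.sum_congr rfl fun k _ => Finset.sum_congr rfl fun l _ => by ring
  simp_rw [hexpand]
  rw [integral_finsetSum _ fun k _ => integrable_finsetSum _ fun l _ => (hss k l).const_mul _]
  simp_rw [integral_finsetSum _ fun l _ => (hss _ l).const_mul _, integral_const_mul]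
  simp only [mul_apply, transpose_apply, of_apply, Finset.sum_mul]
  rw [Finset.sum_comm]
  exact Finset.sum_congr rfl fun k _ => Finset.sum_congr rfl fun l _ => by ring

theorem integral_norm_sum_smul_sub_sq {ι E : Type*} [Fintype ι]
    [NormedAddCommGroup E] [InnerProductSpace ℝ E] [CompleteSpace E]
    (c : ι → Ω → ℝ) (hc : ∀ m, MemLp (c m) 2 μ) (Z : Ω → E) (hZ : MemLp Z 2 μ)
    (v : ι → E) (Q : Matrix ι ι ℝ)
    (hQ : ∀ m k, ∫ ω, c m ω * c k ω ∂μ = Q m k)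
    (hcZ : ∀ m, ∫ ω, c m ω • Z ω ∂μ = ∑ k, Q m k • v k) :
    ∫ ω, ‖∑ m, c m ω • v m - Z ω‖ ^ 2 ∂μ
      = ∫ ω, ‖Z ω‖ ^ 2 ∂μ - ∑ m, ∑ k, Q m k * ⟪v m, v k⟫ := by
  have hexpand : ∀ ω, ‖∑ m, c m ω • v m - Z ω‖ ^ 2
      = ∑ m, ∑ k, c m ω * c k ω * ⟪v m, v k⟫ - 2 * ∑ m, ⟪v m, c m ω • Z ω⟫ + ‖Z ω‖ ^ 2 := by
    intro ω
    rw [norm_sub_sq_real, ← real_inner_self_eq_norm_sq, sum_inner, sum_inner, Finset.mul_sum]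
    simp only [inner_sum, real_inner_smul_left, real_inner_smul_right, Finset.mul_sum]
    congr 2
    exact Finset.sum_congr rfl fun m _ => Finset.sum_congr rfl fun k _ => by ring
  have hZZ : Integrable (fun ω => ‖Z ω‖ ^ 2) μ := (memLp_two_iff_integrable_sq_norm hZ.1).1 hZ
  have hcc : ∀ m k, Integrable (fun ω => c m ω * c k ω * ⟪v m, v k⟫) μ :=
    fun m k => ((hc m).integrable_mul (hc k)).mul_const _
  have hcZint : ∀ m, Integrable (fun ω => c m ω • Z ω) μ :=
    fun m => memLp_one_iff_integrable.1 (hZ.smul (hc m))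
  have hquad : Integrable (fun ω => ∑ m, ∑ k, c m ω * c k ω * ⟪v m, v k⟫) μ :=
    integrable_finsetSum _ fun m _ => integrable_finsetSum _ fun k _ => hcc m k
  have hcross : Integrable (fun ω => 2 * ∑ m, ⟪v m, c m ω • Z ω⟫) μ :=
    (integrable_finsetSum _ fun m _ => (hcZint m).const_inner (v m)).const_mul 2
  have hcross_integral : ∀ m, ∫ ω, ⟪v m, c m ω • Z ω⟫ ∂μ = ∑ k, Q m k * ⟪v m, v k⟫ := by
    intro m
    rw [integral_inner (hcZint m), hcZ, inner_sum]
    simp only [real_inner_smul_right]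
  simp_rw [hexpand]
  rw [integral_add _ hZZ, integral_sub hquad hcross, integral_const_mul,
    integral_finsetSum _ fun m _ => integrable_finsetSum _ fun k _ => hcc m k,
    integral_finsetSum _ fun m _ => (hcZint m).const_inner (v m)]
  · simp_rw [hcross_integral, integral_finsetSum _ fun k _ => hcc _ k, integral_mul_const, hQ]
    ring
  · exact hquad.sub hcross

theorem sum_inner_apply_eq_re_trace {m n : Type*} [Fintype m] [Fintype n]
    (A B : Matrix m n ℂ) : ∑ i, ∑ j, inner ℝ (A i j) (B i j) = (trace (Aᴴ * B)).re := by
  simp only [trace, diag_apply, mul_apply, conjTranspose_apply, Complex.re_sum, Complex.inner]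
  rw [Finset.sum_comm]
  simp [mul_comm]

theorem integral_frobSq {N : ℕ} {F : Ω → Matrix (Fin N) (Fin N) ℂ}
    (hF : ∀ i j, MemLp (fun ω => F ω i j) 2 μ) :
    ∫ ω, frobSq (F ω) ∂μ = ∑ i, ∑ j, ∫ ω, ‖F ω i j‖ ^ 2 ∂μ := by
  have hint : ∀ i j, Integrable (fun ω => ‖F ω i j‖ ^ 2) μ :=
    fun i j => (memLp_two_iff_integrable_sq_norm (hF i j).1).1 (hF i j)
  simp only [frobSq]
  rw [integral_finsetSum _ fun i _ => integrable_finsetSum _ fun j _ => hint i j]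
  simp_rw [integral_finsetSum _ fun j _ => hint _ j]

theorem integral_frobSq_sum_smul_sub {ι : Type*} [Fintype ι] {N : ℕ}
    (c : ι → Ω → ℝ) (hc : ∀ m, MemLp (c m) 2 μ)
    (Z : Ω → Matrix (Fin N) (Fin N) ℂ) (hZ : ∀ i j, MemLp (fun ω => Z ω i j) 2 μ)
    (V : ι → Matrix (Fin N) (Fin N) ℂ) (Q : Matrix ι ι ℝ)
    (hQ : ∀ m k, ∫ ω, c m ω * c k ω ∂μ = Q m k)
    (hcZ : ∀ m i j, ∫ ω, c m ω • Z ω i j ∂μ = ∑ k, Q m k • V k i j) :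
    ∫ ω, frobSq (∑ m, c m ω • V m - Z ω) ∂μ
      = ∫ ω, frobSq (Z ω) ∂μ - ∑ m, ∑ k, Q m k * (trace ((V m)ᴴ * V k)).re := by
  have hentry : ∀ ω i j, (∑ m, c m ω • V m - Z ω) i j = ∑ m, c m ω • V m i j - Z ω i j := by
    intro ω i j
    simp only [Matrix.sub_apply, Matrix.sum_apply, Matrix.smul_apply]
  have hmem : ∀ i j, MemLp (fun ω => (∑ m, c m ω • V m - Z ω) i j) 2 μ := by
    intro i j
    simp_rw [hentry, Complex.real_smul]
    exact (memLp_finsetSum (f := fun m ω => (c m ω : ℂ) * V m i j) _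
      fun m _ => (hc m).ofReal.mul_const (V m i j)).sub (hZ i j)
  have hentrywise : ∀ i j, ∫ ω, ‖(∑ m, c m ω • V m - Z ω) i j‖ ^ 2 ∂μ
      = ∫ ω, ‖Z ω i j‖ ^ 2 ∂μ - ∑ m, ∑ k, Q m k * ⟪V m i j, V k i j⟫ := by
    intro i j
    simp_rw [hentry]
    exact integral_norm_sum_smul_sub_sq c hc _ (hZ i j) _ Q hQ fun m => hcZ m i j
  rw [integral_frobSq hmem, integral_frobSq hZ]
  simp_rw [hentrywise, Finset.sum_sub_distrib, ← sum_inner_apply_eq_re_trace, Finset.mul_sum,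
    Finset.sum_comm (γ := Fin N) (α := ι)]

end

theorem stmt16_general {Ω : Type*} [MeasureSpace Ω] [IsProbabilityMeasure (ℙ : Measure Ω)]
    {M N : ℕ} (Ty : Ω → Fin M → ℝ) (X : Ω → Matrix (Fin N) (Fin N) ℂ)
    (hTy : ∀ m, MemLp (fun ω => Ty ω m) 2 ℙ)
    (hX : ∀ i j, MemLp (fun ω => X ω i j) 2 ℙ)
    (Tbar : Fin M → ℝ)
    (Tmat : Matrix (Fin M) (Fin M) ℝ)
    (hTmat : ∀ m m', Tmat m m' = ∫ ω, (Ty ω m - Tbar m) * (Ty ω m' - Tbar m') ∂ℙ)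
    (hTunit : IsUnit Tmat.det)
    (K : Matrix (Fin N) (Fin N) ℂ)
    (V : Fin M → Matrix (Fin N) (Fin N) ℂ)
    (hV : ∀ m i j, V m i j = ∫ ω, ((Ty ω m - Tbar m : ℝ) : ℂ) * (X ω i j - K i j) ∂ℙ) :
    ∫ ω, frobSq (K + (∑ m, ((Tmat⁻¹ *ᵥ (Ty ω - Tbar)) m) • V m) - X ω) ∂ℙ
      = (∫ ω, frobSq (X ω - K) ∂ℙ)
        - ∑ m, ∑ m', Tmat⁻¹ m m' * (Matrix.trace ((V m)ᴴ * V m')).re := by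
  set s : Ω → Fin M → ℝ := fun ω => Ty ω - Tbar
  have hs : ∀ m, MemLp (fun ω => s ω m) 2 ℙ := fun m => (hTy m).sub (memLp_const _)
  have hZ : ∀ i j, MemLp (fun ω => (X ω - K) i j) 2 ℙ := fun i j => (hX i j).sub (memLp_const _)
  have hcov : Matrix.of (fun k l => ∫ ω, s ω k * s ω l ∂ℙ) = Tmat := by
    ext k l
    exact (hTmat k l).symm
  have hTsymm : Tmatᵀ = Tmat := by
    rw [← hcov]
    ext k l
    simp only [transpose_apply, of_apply, mul_comm]
  have hQ : ∀ m k, ∫ ω, (Tmat⁻¹ *ᵥ s ω) m * (Tmat⁻¹ *ᵥ s ω) k ∂ℙ = Tmat⁻¹ m k := by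
    intro m k
    rw [integral_mulVec_apply_mul_mulVec_apply _ _ hs, hcov, nonsing_inv_mul _ hTunit, one_mul,
      transpose_nonsing_inv, hTsymm]
  have hcZ : ∀ m i j, ∫ ω, (Tmat⁻¹ *ᵥ s ω) m • (X ω - K) i j ∂ℙ = ∑ k, Tmat⁻¹ m k • V k i j := by
    intro m i j
    rw [integral_mulVec_apply_smul]
    · refine Finset.sum_congr rfl fun k _ => congrArg _ ?_
      simp only [hV, s, Pi.sub_apply, Matrix.sub_apply, Complex.real_smul]
    · exact fun k => memLp_one_iff_integrable.1 ((hZ i j).smul (𝕜 := ℝ) (hs k))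
  have hestimator : ∀ ω, K + ∑ m, (Tmat⁻¹ *ᵥ (Ty ω - Tbar)) m • V m - X ω
      = ∑ m, (Tmat⁻¹ *ᵥ (Ty ω - Tbar)) m • V m - (X ω - K) := fun ω => by abel
  simp_rw [hestimator]
  exact integral_frobSq_sum_smul_sub _ (memLp_mulVec_apply _ hs) _ hZ V _ hQ hcZ

/-- The spectral MSE of the linear spectral estimator
`D = K + Σ_m t_m V_m`, `t = T⁻¹(T(y) − T̄)`, equals
`E‖X − K‖_F² − Σ_{m,m'} [T⁻¹]_{m,m'} tr(V_mᴴ V_{m'})`. -/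
theorem stmt16 {Ω : Type*} [MeasureSpace Ω] [IsProbabilityMeasure (ℙ : Measure Ω)]
    {M N : ℕ} (Ty : Ω → Fin M → ℝ) (X : Ω → Matrix (Fin N) (Fin N) ℂ)
    (hHerm : ∀ ω, (X ω).IsHermitian)
    (hTy : ∀ m, MemLp (fun ω => Ty ω m) 2 ℙ)
    (hX : ∀ i j, MemLp (fun ω => X ω i j) 2 ℙ)
    (Tbar : Fin M → ℝ) (hTbar : ∀ m, Tbar m = ∫ ω, Ty ω m ∂ℙ)
    (Tmat : Matrix (Fin M) (Fin M) ℝ)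
    (hTmat : ∀ m m', Tmat m m' = ∫ ω, (Ty ω m - Tbar m) * (Ty ω m' - Tbar m') ∂ℙ)
    (hTunit : IsUnit Tmat.det)
    (K : Matrix (Fin N) (Fin N) ℂ) (hK : ∀ i j, K i j = ∫ ω, X ω i j ∂ℙ)
    (V : Fin M → Matrix (Fin N) (Fin N) ℂ)
    (hV : ∀ m i j, V m i j = ∫ ω, ((Ty ω m - Tbar m : ℝ) : ℂ) * (X ω i j - K i j) ∂ℙ) :
    ∫ ω, frobSq (K + (∑ m, ((Tmat⁻¹ *ᵥ (Ty ω - Tbar)) m) • V m) - X ω) ∂ℙ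
      = (∫ ω, frobSq (X ω - K) ∂ℙ)
        - ∑ m, ∑ m', Tmat⁻¹ m m' * (Matrix.trace ((V m)ᴴ * V m')).re :=
  stmt16_general Ty X hTy hX Tbar Tmat hTmat hTunit K V hV
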